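/- arXiv:2003.13752 — 6 statements merged into one kernel-verified Lean document; each statement's English description precedes it below -/
import Mathlib

section
/- Let J be a non-trivial ideal of ℝ[x₁,…,xₙ] and let G ⊆ J be a reduced Gröbner basis of J with respect to a monomial order ≼ such that every element of G is a binomial (this holds automatically when J is a binomial ideal, by Eisenbud–Sturmfels). Then J ∩ ℝ≥0[x] = {0} if and only if G ∩ ℝ≥0[x] = ∅. -/
/-!
If every element of `G` has a negative coefficient, then, having leading coefficient `1` and only
one further term, it is `x^β - c x^γ` with `c > 0`. Reducing a nonzero `f ∈ J ∩ ℝ≥0[x]` by a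
monomial multiple of the basis element whose leading monomial divides `LM(f)` cancels the leading
term and only adds positive mass elsewhere, so it produces a nonzero element of `J ∩ ℝ≥0[x]` with
smaller leading monomial; this descent cannot go on forever in a well-order.
-/

open MvPolynomial

/-- A monomial order on exponent vectors in `ℕⁿ`: a linear order on `Fin n →₀ ℕ`
compatible with addition and having `0` as least element. -/
structure MonOrd (n : ℕ) where
  le : (Fin n →₀ ℕ) → (Fin n →₀ ℕ) → Prop
  le_refl : ∀ a, le a a
  le_trans : ∀ a b c, le a b → le b c → le a c
  le_antisymm : ∀ a b, le a b → le b a → a = b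
  le_total : ∀ a b, le a b ∨ le b a
  add_le_add_right : ∀ a b, le a b → ∀ c, le (a + c) (b + c)
  zero_le : ∀ a, le 0 a

/-- `α` is the exponent vector of the `m`-leading monomial of `f`. -/
def IsLeadMon {n : ℕ} (m : MonOrd n) (f : MvPolynomial (Fin n) ℝ) (α : Fin n →₀ ℕ) : Prop :=
  α ∈ f.support ∧ ∀ β ∈ f.support, m.le β α

/-- `G` is a Gröbner basis of `J` with respect to the monomial order `m`:
a finite set of nonzero polynomials of `J` such that for every nonzero `f ∈ J`
the leading monomial of some `g ∈ G` divides the leading monomial of `f`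
(divisibility of monomials being the pointwise order on exponent vectors). -/
def IsGroebnerBasis {n : ℕ} (m : MonOrd n) (G : Finset (MvPolynomial (Fin n) ℝ))
    (J : Ideal (MvPolynomial (Fin n) ℝ)) : Prop :=
  (G : Set (MvPolynomial (Fin n) ℝ)) ⊆ (J : Set (MvPolynomial (Fin n) ℝ)) ∧
    (∀ g ∈ G, g ≠ 0) ∧
    ∀ f ∈ J, f ≠ 0 → ∃ g ∈ G, ∃ α β, IsLeadMon m f α ∧ IsLeadMon m g β ∧ β ≤ α

/-- A reduced Gröbner basis: every element has leading coefficient `1`, and no monomial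
occurring in any `g ∈ G` is divisible by the leading monomial of another element of `G`. -/
def IsReducedGroebnerBasis {n : ℕ} (m : MonOrd n) (G : Finset (MvPolynomial (Fin n) ℝ))
    (J : Ideal (MvPolynomial (Fin n) ℝ)) : Prop :=
  IsGroebnerBasis m G J ∧
    (∀ g ∈ G, ∀ β, IsLeadMon m g β → coeff β g = 1) ∧
    ∀ g ∈ G, ∀ g' ∈ G, g ≠ g' → ∀ α ∈ g.support, ∀ β, IsLeadMon m g' β → ¬ β ≤ α

/-- All coefficients of `f` are nonnegative, i.e. `f ∈ ℝ≥0[x]`. -/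
def NonnegCoeffs {n : ℕ} (f : MvPolynomial (Fin n) ℝ) : Prop := ∀ α, 0 ≤ coeff α f

theorem IsLeadMon.unique {n : ℕ} {m : MonOrd n} {f : MvPolynomial (Fin n) ℝ} {α α' : Fin n →₀ ℕ}
    (h : IsLeadMon m f α) (h' : IsLeadMon m f α') : α = α' :=
  m.le_antisymm _ _ (h'.2 α h.1) (h.2 α' h'.1)

theorem coeff_nonpos_of_card_support_eq_two {n : ℕ} {g : MvPolynomial (Fin n) ℝ}
    {β : Fin n →₀ ℕ} (hcard : g.support.card = 2) (hβ : 0 < coeff β g)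
    (hneg : ¬ NonnegCoeffs g) (γ : Fin n →₀ ℕ) (hγβ : γ ≠ β) : coeff γ g ≤ 0 := by
  obtain ⟨δ, hδ⟩ : ∃ δ, coeff δ g < 0 := by simpa [NonnegCoeffs] using hneg
  by_contra! hγ
  have : 2 < g.support.card := Finset.two_lt_card.mpr
    ⟨β, mem_support_iff.mpr hβ.ne', γ, mem_support_iff.mpr hγ.ne', δ, mem_support_iff.mpr hδ.ne,
      hγβ.symm, fun h => by subst h; linarith, fun h => by subst h; linarith⟩
  omega

namespace MonOrd

variable {n : ℕ} (m : MonOrd n)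

theorem le_of_le {a b : Fin n →₀ ℕ} (h : a ≤ b) : m.le a b := by
  obtain ⟨c, rfl⟩ := le_iff_exists_add.mp h
  simpa [add_comm] using m.add_le_add_right 0 c (m.zero_le c) a

def lt (a b : Fin n →₀ ℕ) : Prop := m.le a b ∧ ¬ m.le b a

theorem lt_of_le_of_ne {a b : Fin n →₀ ℕ} (h : m.le a b) (hne : a ≠ b) : m.lt a b :=
  ⟨h, fun h' => hne (m.le_antisymm a b h h')⟩

instance : IsPreorder (Fin n →₀ ℕ) m.le where
  refl := m.le_refl
  trans := m.le_trans

/-- Dickson's lemma makes every monomial order a well-order. -/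
theorem wellFounded_lt : WellFounded m.lt :=
  WellQuasiOrdered.wellFounded fun f =>
    let ⟨i, j, hij, hle⟩ := wellQuasiOrdered_le f
    ⟨i, j, hij, m.le_of_le hle⟩

open Classical in
@[reducible] noncomputable def toLinearOrder : LinearOrder (Fin n →₀ ℕ) where
  le := m.le
  le_refl := m.le_refl
  le_trans := m.le_trans
  le_antisymm := m.le_antisymm
  le_total := m.le_total
  lt := m.lt
  lt_iff_le_not_ge _ _ := Iff.rfl
  toDecidableLE := inferInstance
  min a b := if m.le a b then a else b
  max a b := if m.le a b then b else a
  min_def _ _ := rfl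
  max_def _ _ := rfl

theorem exists_isLeadMon {f : MvPolynomial (Fin n) ℝ} (hf : f ≠ 0) : ∃ α, IsLeadMon m f α :=
  @Finset.exists_max_image _ _ m.toLinearOrder f.support id (support_nonempty.mpr hf)

/-- Subtracting a monomial multiple of `g` cancels the leading term of `f`; since the other
coefficients of `g` are nonpositive, this only increases the remaining coefficients of `f`. -/
theorem exists_reduction {f g : MvPolynomial (Fin n) ℝ} {α β : Fin n →₀ ℕ}
    (hf : NonnegCoeffs f) (hα : IsLeadMon m f α) (hβ : IsLeadMon m g β) (hβα : β ≤ α)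
    (hpos : 0 < coeff β g) (hrest : ∀ γ ≠ β, coeff γ g ≤ 0) (hneg : ¬ NonnegCoeffs g) :
    ∃ q, NonnegCoeffs (f - q * g) ∧ f - q * g ≠ 0 ∧ ∀ δ ∈ (f - q * g).support, m.lt δ α := by
  obtain ⟨γ, hγ⟩ : ∃ γ, coeff γ g < 0 := by simpa [NonnegCoeffs] using hneg
  set d := α - β
  set k := coeff α f / coeff β g
  have hd : β + d = α := add_tsub_cancel_of_le hβα
  have hk : 0 < k := div_pos ((hf α).lt_of_ne (mem_support_iff.mp hα.1).symm) hpos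
  have hcoeff : ∀ δ, coeff δ (f - monomial d k * g) =
      coeff δ f - if d ≤ δ then k * coeff (δ - d) g else 0 := fun δ => by
    rw [coeff_sub, coeff_monomial_mul']
  have hcoeff_α : coeff α (f - monomial d k * g) = 0 := by
    rw [hcoeff, if_pos (hd ▸ le_add_self), ← hd, add_tsub_cancel_right, hd]
    simp only [k, div_mul_cancel₀ _ hpos.ne', sub_self]
  refine ⟨monomial d k, fun δ => ?_, fun h0 => ?_, fun δ hδ => ?_⟩
  · by_cases hδα : δ = α
    · rw [hδα, hcoeff_α]
    rw [hcoeff]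
    split_ifs with hdδ
    · have : δ - d ≠ β := fun h => hδα (by rw [← hd, ← h, tsub_add_cancel_of_le hdδ])
      nlinarith [hrest _ this, hf δ]
    · simpa using hf δ
  · have := hcoeff (γ + d)
    rw [h0, if_pos le_add_self, add_tsub_cancel_right, coeff_zero] at this
    nlinarith [hf (γ + d)]
  · refine m.lt_of_le_of_ne ?_ fun h => (mem_support_iff.mp hδ) (h ▸ hcoeff_α)
    have hδ' := mem_support_iff.mp hδ
    rw [hcoeff] at hδ'
    split_ifs at hδ' with hdδ
    · by_cases hg : coeff (δ - d) g = 0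
      · exact hα.2 δ (mem_support_iff.mpr (by simpa [hg] using hδ'))
      · have := m.add_le_add_right _ _ (hβ.2 _ (mem_support_iff.mpr hg)) d
        rwa [tsub_add_cancel_of_le hdδ, hd] at this
    · exact hα.2 δ (mem_support_iff.mpr (by simpa using hδ'))

theorem eq_zero_of_mem_of_nonnegCoeffs {G : Finset (MvPolynomial (Fin n) ℝ)}
    {J : Ideal (MvPolynomial (Fin n) ℝ)} (hG : IsGroebnerBasis m G J)
    (hsign : ∀ g ∈ G, ∀ β, IsLeadMon m g β → 0 < coeff β g ∧ ∀ γ ≠ β, coeff γ g ≤ 0)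
    (hneg : ∀ g ∈ G, ¬ NonnegCoeffs g) {f : MvPolynomial (Fin n) ℝ} (hfJ : f ∈ J)
    (hf : NonnegCoeffs f) : f = 0 := by
  by_contra hf0
  obtain ⟨α, hα⟩ := m.exists_isLeadMon hf0
  induction α using m.wellFounded_lt.induction generalizing f with
  | _ α ih =>
  obtain ⟨g, hgG, α', β, hα', hβ, hβα⟩ := hG.2.2 f hfJ hf0
  obtain rfl := hα.unique hα'
  obtain ⟨hpos, hrest⟩ := hsign g hgG β hβ
  obtain ⟨q, hnn, hne, hlt⟩ := m.exists_reduction hf hα hβ hβα hpos hrest (hneg g hgG)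
  obtain ⟨α'', hα''⟩ := m.exists_isLeadMon hne
  exact ih α'' (hlt α'' hα''.1) (J.sub_mem hfJ (J.mul_mem_left q (hG.1 hgG))) hnn hne hα''

end MonOrd

theorem statement0_general (n : ℕ) (m : MonOrd n) (J : Ideal (MvPolynomial (Fin n) ℝ))
    (G : Finset (MvPolynomial (Fin n) ℝ)) (hG : IsReducedGroebnerBasis m G J)
    (hbin : ∀ g ∈ G, g.support.card = 2) :
    (J : Set (MvPolynomial (Fin n) ℝ)) ∩ {f | NonnegCoeffs f} = {0} ↔
      (G : Set (MvPolynomial (Fin n) ℝ)) ∩ {f | NonnegCoeffs f} = ∅ := by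
  obtain ⟨hGB, hmonic, -⟩ := hG
  constructor
  · refine fun h => Set.eq_empty_iff_forall_notMem.mpr fun g ⟨hgG, hg⟩ => hGB.2.1 g hgG ?_
    exact Set.mem_singleton_iff.mp (h ▸ ⟨hGB.1 hgG, hg⟩)
  · intro h
    have hneg : ∀ g ∈ G, ¬ NonnegCoeffs g := fun g hgG hg => h.subset ⟨hgG, hg⟩
    have hsign : ∀ g ∈ G, ∀ β, IsLeadMon m g β → 0 < coeff β g ∧ ∀ γ ≠ β, coeff γ g ≤ 0 := by
      intro g hgG β hβ
      have hpos : 0 < coeff β g := by rw [hmonic g hgG β hβ]; exact one_pos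
      exact ⟨hpos, coeff_nonpos_of_card_support_eq_two (hbin g hgG) hpos (hneg g hgG)⟩
    refine Set.Subset.antisymm
      (fun f ⟨hfJ, hf⟩ => m.eq_zero_of_mem_of_nonnegCoeffs hGB hsign hneg hfJ hf) ?_
    rintro _ rfl
    exact ⟨J.zero_mem, fun α => (coeff_zero α).ge⟩

/-- Let `J` be a non-trivial ideal of `ℝ[x₁,…,xₙ]` and `G ⊆ J` a reduced Gröbner basis of `J`
consisting of binomials. Then `J ∩ ℝ≥0[x] = {0}` iff `G ∩ ℝ≥0[x] = ∅`. -/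
theorem statement0 (n : ℕ) (m : MonOrd n) (J : Ideal (MvPolynomial (Fin n) ℝ)) (hJ : J ≠ ⊥)
    (G : Finset (MvPolynomial (Fin n) ℝ)) (hG : IsReducedGroebnerBasis m G J)
    (hbin : ∀ g ∈ G, g.support.card = 2) :
    (J : Set (MvPolynomial (Fin n) ℝ)) ∩ {f | NonnegCoeffs f} = {0} ↔
      (G : Set (MvPolynomial (Fin n) ℝ)) ∩ {f | NonnegCoeffs f} = ∅ :=
  statement0_general n m J G hG hbin
end

section
/- Let ≼ be a monomial order on ℝ[x₁,…,xₙ], let f ∈ ℝ[x₁,…,xₙ] be a nonzero polynomial all of whose coefficients are nonnegative, and let g be a binomial one of whose coefficients is positive and the other negative. Then the S-polynomial spoly_≼(f,g) := (lcm(LM_≼(f),LM_≼(g))/LT_≼(f))·f − (lcm(LM_≼(f),LM_≼(g))/LT_≼(g))·g again has all coefficients nonnegative (possibly spoly_≼(f,g) = 0). -/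
open MvPolynomial

/-- The S-polynomial of `f` and `g`, given the exponent vectors `α`, `β` of their
leading monomials: `spoly = (lcm(x^α,x^β)/LT f)·f − (lcm(x^α,x^β)/LT g)·g`, where
the lcm of the monomials has exponent vector `α ⊔ β` (pointwise maximum). -/
noncomputable def spoly {n : ℕ} (f g : MvPolynomial (Fin n) ℝ) (α β : Fin n →₀ ℕ) :
    MvPolynomial (Fin n) ℝ :=
  monomial (α ⊔ β - α) (coeff α f)⁻¹ * f - monomial (α ⊔ β - β) (coeff β g)⁻¹ * g

/-- If `f` is a nonzero polynomial with nonnegative coefficients and `g` is a binomial with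
one positive and one negative coefficient, then the S-polynomial `spoly(f,g)` again has all
coefficients nonnegative. -/
theorem statement1 (n : ℕ) (m : MonOrd n) (f g : MvPolynomial (Fin n) ℝ)
    (hf0 : f ≠ 0) (hf : NonnegCoeffs f)
    (hg : g.support.card = 2)
    (hgsgn : ∃ δ₁ ∈ g.support, ∃ δ₂ ∈ g.support, 0 < coeff δ₁ g ∧ coeff δ₂ g < 0)
    (α β : Fin n →₀ ℕ) (hα : IsLeadMon m f α) (hβ : IsLeadMon m g β) :
    NonnegCoeffs (spoly f g α β) := by
  obtain ⟨hαs, -⟩ := hα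
  obtain ⟨hβs, -⟩ := hβ
  have ha : 0 < coeff α f := lt_of_le_of_ne (hf α) (Ne.symm (mem_support_iff.mp hαs))
  have hb : coeff β g ≠ 0 := mem_support_iff.mp hβs
  obtain ⟨x, y, hxy, hs⟩ := Finset.card_eq_two.mp hg
  have hβxy : β = x ∨ β = y := by
    have := hβs; rw [hs] at this; simpa using this
  obtain ⟨δ, hδβ, hsupp⟩ : ∃ δ, δ ≠ β ∧ g.support = {β, δ} := by
    rcases hβxy with rfl | rfl
    · exact ⟨y, fun h => hxy h.symm, hs⟩
    · exact ⟨x, hxy, by rw [hs, Finset.pair_comm]⟩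
  have hsign : (coeff β g)⁻¹ * coeff δ g ≤ 0 := by
    obtain ⟨δ₁, h1, δ₂, h2, hp, hn⟩ := hgsgn
    rw [hsupp, Finset.mem_insert, Finset.mem_singleton] at h1 h2
    have h12 : δ₁ ≠ δ₂ := by rintro rfl; linarith
    have hbc : coeff β g * coeff δ g < 0 := by
      rcases h1 with rfl | rfl <;> rcases h2 with rfl | rfl <;>
        first
          | exact absurd rfl h12
          | exact absurd rfl (Ne.symm h12)
          | exact mul_neg_of_pos_of_neg hp hn
          | exact mul_neg_of_neg_of_pos hn hp
    rcases lt_or_gt_of_ne hb with hbneg | hbpos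
    · have hc : 0 < coeff δ g := by nlinarith
      exact mul_nonpos_iff.mpr (Or.inr ⟨inv_nonpos.mpr hbneg.le, hc.le⟩)
    · have hc : coeff δ g < 0 := by nlinarith
      exact mul_nonpos_iff.mpr (Or.inl ⟨inv_nonneg.mpr hbpos.le, hc.le⟩)
  intro μ
  rw [spoly, coeff_sub, coeff_monomial_mul', coeff_monomial_mul']
  have hP : 0 ≤ if α ⊔ β - α ≤ μ then (coeff α f)⁻¹ * coeff (μ - (α ⊔ β - α)) f else 0 := by
    split_ifs
    · exact mul_nonneg (inv_nonneg.mpr ha.le) (hf _)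
    · exact le_refl _
  by_cases hq : α ⊔ β - β ≤ μ
  · rw [if_pos hq]
    by_cases hνβ : μ - (α ⊔ β - β) = β
    · have hμ : μ = α ⊔ β := by
        have h1 : μ - (α ⊔ β - β) + (α ⊔ β - β) = μ := tsub_add_cancel_of_le hq
        rw [hνβ] at h1
        rw [← h1, add_comm, tsub_add_cancel_of_le le_sup_right]
      subst hμ
      rw [hνβ, if_pos tsub_le_self, tsub_tsub_cancel_of_le le_sup_left,
        inv_mul_cancel₀ ha.ne', inv_mul_cancel₀ hb]
      simp
    · by_cases hνδ : μ - (α ⊔ β - β) = δ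
      · rw [hνδ]
        have := hP
        split_ifs at this ⊢ <;> exact sub_nonneg.mpr (hsign.trans this)
      · have hz : coeff (μ - (α ⊔ β - β)) g = 0 := by
          rw [← notMem_support_iff, hsupp]
          simp [hνβ, hνδ]
        rw [hz, mul_zero, sub_zero]
        exact hP
  · rw [if_neg hq, sub_zero]
    exact hP
end

section
/- Let J ⊴ ℝ[x₁,…,xₙ] be an ideal that is weighted homogeneous with respect to a nonzero weight vector w = (w₁,…,wₙ) ∈ ℤⁿ, and suppose wᵢ ≠ 0 for some index i. Then J has a common zero in (ℝ_{>0})ⁿ if and only if the ideal J + ⟨xᵢ − 1⟩ has a common zero in (ℝ_{>0})ⁿ. -/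
open MvPolynomial

/-- `f` is weighted homogeneous of degree `d` with respect to the weight vector `w ∈ ℤⁿ`:
`w·α = d` for every exponent vector `α` occurring in `f`. -/
def IsWeightedHomogOf {n : ℕ} (w : Fin n → ℤ) (f : MvPolynomial (Fin n) ℝ) (d : ℤ) : Prop :=
  ∀ α ∈ f.support, (∑ i, w i * (α i : ℤ)) = d

lemma eval_scale {n : ℕ} (w : Fin n → ℤ) (f : MvPolynomial (Fin n) ℝ) (d : ℤ)
    (hf : IsWeightedHomogOf w f d) (z : Fin n → ℝ) (t : ℝ) (ht : 0 < t) :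
    eval (fun j => t ^ (w j : ℝ) * z j) f = t ^ (d : ℝ) * eval z f := by
  rw [eval_eq', eval_eq', Finset.mul_sum]
  refine Finset.sum_congr rfl fun α hα => ?_
  have key : (∏ j, (t ^ (w j : ℝ) * z j) ^ α j)
      = t ^ (d : ℝ) * ∏ j, z j ^ α j := by
    have : ∀ j, (t ^ (w j : ℝ) * z j) ^ α j
        = t ^ ((w j * α j : ℤ) : ℝ) * z j ^ α j := by
      intro j
      rw [mul_pow, ← Real.rpow_natCast (t ^ (w j : ℝ)) (α j), ← Real.rpow_mul ht.le]
      push_cast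
      ring_nf
    simp only [this, Finset.prod_mul_distrib]
    rw [← Real.rpow_sum_of_pos ht]
    congr 2
    rw [← hf α hα]
    push_cast
    ring
  rw [key]; ring

/-- Let `J ⊴ ℝ[x₁,…,xₙ]` be generated by polynomials each weighted homogeneous with
respect to a weight vector `w ∈ ℤⁿ`, and suppose `wᵢ ≠ 0`.  Then `J` has a common zero
with all coordinates strictly positive if and only if `J + ⟨xᵢ − 1⟩` does. -/
theorem statement4 (n : ℕ) (w : Fin n → ℤ)
    (S : Set (MvPolynomial (Fin n) ℝ)) (J : Ideal (MvPolynomial (Fin n) ℝ))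
    (hJ : J = Ideal.span S) (hS : ∀ f ∈ S, ∃ d : ℤ, IsWeightedHomogOf w f d)
    (i : Fin n) (hwi : w i ≠ 0) :
    (∃ z : Fin n → ℝ, (∀ j, 0 < z j) ∧ ∀ f ∈ J, eval z f = 0) ↔
      (∃ z : Fin n → ℝ, (∀ j, 0 < z j) ∧
        ∀ f ∈ J ⊔ Ideal.span {X i - 1}, eval z f = 0) := by
  constructor
  · rintro ⟨z, hz, hzJ⟩
    set t : ℝ := z i ^ (-(1 : ℝ) / (w i : ℝ)) with ht_def
    have ht : 0 < t := Real.rpow_pos_of_pos (hz i) _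
    set z' : Fin n → ℝ := fun j => t ^ (w j : ℝ) * z j with hz'_def
    have hz' : ∀ j, 0 < z' j := fun j => mul_pos (Real.rpow_pos_of_pos ht _) (hz j)
    have hz'i : z' i = 1 := by
      have hwr : ((w i : ℝ)) ≠ 0 := by exact_mod_cast hwi
      have hti : t ^ ((w i : ℝ)) = (z i)⁻¹ := by
        rw [ht_def]
        rw [← Real.rpow_mul (hz i).le, div_mul_cancel₀ _ hwr, Real.rpow_neg_one]
      show t ^ ((w i : ℝ)) * z i = 1
      rw [hti, inv_mul_cancel₀ (hz i).ne']
    refine ⟨z', hz', ?_⟩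
    have hker : J ⊔ Ideal.span {X i - 1} ≤ RingHom.ker (eval z') := by
      rw [hJ, ← Ideal.span_union, Ideal.span_le]
      rintro f (hf | hf)
      · obtain ⟨d, hd⟩ := hS f hf
        have := eval_scale w f d hd z t ht
        simp only [RingHom.mem_ker, SetLike.mem_coe]
        rw [show eval z' f = eval (fun j => t ^ (w j : ℝ) * z j) f from rfl, this,
          hzJ f (hJ ▸ Ideal.subset_span hf), mul_zero]
      · simp only [Set.mem_singleton_iff] at hf
        subst hf
        simp [RingHom.mem_ker, hz'i]
    exact fun f hf => hker hf
  · rintro ⟨z, hz, hzJ⟩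
    exact ⟨z, hz, fun f hf => hzJ f (Ideal.mem_sup_left hf)⟩
end

section
/- Let B ∈ ℤ^{d×n} be a matrix in row echelon form with rows b₁,…,b_d and pivot columns i₁ < i₂ < … < i_d (that is, for each k the entry b_{k,i_k} is nonzero and b_{k,j} = 0 for all j < i_k), and set Λ := {i₁,…,i_d}. Let J ⊴ ℝ[x₁,…,xₙ] be an ideal generated by polynomials each of which is weighted homogeneous with respect to every row b₁,…,b_d. Then J has a common zero in (ℝ_{>0})ⁿ if and only if the ideal J + ⟨xᵢ − 1 : i ∈ Λ⟩ has a common zero in (ℝ_{>0})ⁿ. -/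
open MvPolynomial

/-- `f` is weighted homogeneous with respect to the weight vector `w ∈ ℤⁿ`:
there is `d ∈ ℤ` with `w·α = d` for every exponent vector `α` occurring in `f`. -/
def IsWeightedHomog {n : ℕ} (w : Fin n → ℤ) (f : MvPolynomial (Fin n) ℝ) : Prop :=
  ∃ d : ℤ, ∀ α ∈ f.support, (∑ i, w i * (α i : ℤ)) = d

/-- Let `B ∈ ℤ^{d×n}` be in row echelon form with pivot columns `Λ = {i₁ < … < i_d}`, and
let `J ⊴ ℝ[x₁,…,xₙ]` be generated by polynomials weighted homogeneous with respect to each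
row of `B`.  Then `J` has a common zero in `(ℝ_{>0})ⁿ` iff `J + ⟨xᵢ − 1 : i ∈ Λ⟩` does. -/
theorem statement6 (n d : ℕ) (B : Fin d → Fin n → ℤ) (pivot : Fin d → Fin n)
    (hpivotMono : StrictMono pivot)
    (hpivotNe : ∀ k, B k (pivot k) ≠ 0)
    (hechelon : ∀ k (j : Fin n), j < pivot k → B k j = 0)
    (S : Set (MvPolynomial (Fin n) ℝ)) (J : Ideal (MvPolynomial (Fin n) ℝ))
    (hJ : J = Ideal.span S) (hS : ∀ f ∈ S, ∀ k, IsWeightedHomog (B k) f) :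
    (∃ z : Fin n → ℝ, (∀ j, 0 < z j) ∧ ∀ f ∈ J, eval z f = 0) ↔
      (∃ z : Fin n → ℝ, (∀ j, 0 < z j) ∧
        ∀ f ∈ J ⊔ Ideal.span ((fun i => X i - (1 : MvPolynomial (Fin n) ℝ)) ''
          Set.range pivot), eval z f = 0) := by
  constructor
  · rintro ⟨z, hz, hzero⟩
    -- the matrix of the triangular system
    set M : Matrix (Fin d) (Fin d) ℝ := fun i j => (B i (pivot j) : ℝ) with hM
    have htri : M.BlockTriangular id := by
      intro i j hij
      have : pivot j < pivot i := hpivotMono hij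
      simp only [hM]
      exact_mod_cast congrArg (Int.cast : ℤ → ℝ) (hechelon i (pivot j) this)
    have hdet : M.det ≠ 0 := by
      rw [Matrix.det_of_upperTriangular htri]
      refine Finset.prod_ne_zero_iff.mpr fun i _ => ?_
      simpa [hM] using hpivotNe i
    set v : Fin d → ℝ := fun k => - Real.log (z (pivot k)) with hv
    set s : Fin d → ℝ := Matrix.vecMul v M⁻¹ with hs
    have hsolve : Matrix.vecMul s M = v := by
      rw [hs, Matrix.vecMul_vecMul, Matrix.nonsing_inv_mul M (isUnit_iff_ne_zero.mpr hdet),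
        Matrix.vecMul_one]
    have hsk : ∀ k, (∑ m, s m * (B m (pivot k) : ℝ)) = - Real.log (z (pivot k)) := by
      intro k
      have := congrFun hsolve k
      simpa [Matrix.vecMul, dotProduct, hM, hv] using this
    set z' : Fin n → ℝ := fun j => z j * Real.exp (∑ m, s m * (B m j : ℝ)) with hz'
    have hz'pos : ∀ j, 0 < z' j := fun j => mul_pos (hz j) (Real.exp_pos _)
    have hz'pivot : ∀ k, z' (pivot k) = 1 := by
      intro k
      rw [hz']
      simp only [hsk k]
      rw [Real.exp_neg, Real.exp_log (hz (pivot k))]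
      exact div_self (ne_of_gt (hz (pivot k)))
    have key : ∀ f ∈ S, eval z' f = 0 := by
      intro f hf
      choose D hD using fun k => hS f hf k
      have h0 : eval z f = 0 := hzero f (hJ ▸ Ideal.subset_span hf)
      have hterm : ∀ α ∈ f.support,
          (∏ j, (z' j) ^ (α j)) =
            Real.exp (∑ m, s m * (D m : ℝ)) * ∏ j, (z j) ^ (α j) := by
        intro α hα
        have hsum : (∑ j, (α j : ℝ) * (∑ m, s m * (B m j : ℝ)))
            = ∑ m, s m * (D m : ℝ) := by
          calc (∑ j, (α j : ℝ) * (∑ m, s m * (B m j : ℝ)))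
              = ∑ j, ∑ m, s m * ((B m j : ℝ) * (α j : ℝ)) := by
                refine Finset.sum_congr rfl fun j _ => ?_
                rw [Finset.mul_sum]
                exact Finset.sum_congr rfl fun m _ => by ring
            _ = ∑ m, ∑ j, s m * ((B m j : ℝ) * (α j : ℝ)) := Finset.sum_comm
            _ = ∑ m, s m * (D m : ℝ) := by
                refine Finset.sum_congr rfl fun m _ => ?_
                rw [← Finset.mul_sum]
                congr 1
                have := hD m α hα
                push_cast [← this]
                norm_num
        calc (∏ j, (z' j) ^ (α j))
            = (∏ j, Real.exp ((α j : ℝ) * (∑ m, s m * (B m j : ℝ)))) *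
                ∏ j, (z j) ^ (α j) := by
              rw [← Finset.prod_mul_distrib]
              refine Finset.prod_congr rfl fun j _ => ?_
              rw [hz', mul_pow, Real.exp_nat_mul]
              ring
          _ = Real.exp (∑ m, s m * (D m : ℝ)) * ∏ j, (z j) ^ (α j) := by
              rw [← Real.exp_sum, hsum]
      have : eval z' f = Real.exp (∑ m, s m * (D m : ℝ)) * eval z f := by
        rw [eval_eq', eval_eq', Finset.mul_sum]
        refine Finset.sum_congr rfl fun α hα => ?_
        rw [hterm α hα]
        ring
      rw [this, h0, mul_zero]
    refine ⟨z', hz'pos, fun f hf => ?_⟩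
    have hle : J ⊔ Ideal.span ((fun i => X i - (1 : MvPolynomial (Fin n) ℝ)) ''
        Set.range pivot) ≤ RingHom.ker (eval z') := by
      rw [hJ, ← Ideal.span_union, Ideal.span_le]
      rintro g (hg | ⟨i, ⟨k, rfl⟩, rfl⟩)
      · exact key g hg
      · simp [RingHom.mem_ker, hz'pivot k]
    exact hle hf
  · rintro ⟨z, hz, hzero⟩
    exact ⟨z, hz, fun f hf => hzero f (Ideal.mem_sup_left hf)⟩
end

section
/- Let J₁, J₂ ⊴ ℝ[x₁,…,xₙ] be ideals with equal saturations at the product of all variables, J₁ : p^∞ = J₂ : p^∞. Then J₁ contains no monomial and satisfies J₁ ∩ ℝ≥0[x] = {0} if and only if J₂ contains no monomial and satisfies J₂ ∩ ℝ≥0[x] = {0}. (In particular, whether a weight vector w lies in the positive tropicalization of an ideal I, characterized by in_w(I) being monomial-free with in_w(I) ∩ ℝ≥0[x] = {0}, depends only on the saturated initial ideal in_w(I) : p^∞.) -/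
open MvPolynomial


/-- The saturation `J : p^∞` of an ideal `J` at the product `p = x₁⋯xₙ` of all variables:
the ideal of all `f` such that `(x₁⋯xₙ)^k · f ∈ J` for some `k ∈ ℕ`. -/
def satIdeal {n : ℕ} {K : Type*} [CommRing K] (J : Ideal (MvPolynomial (Fin n) K)) :
    Ideal (MvPolynomial (Fin n) K) where
  carrier := {f | ∃ k : ℕ, (∏ i, X i) ^ k * f ∈ J}
  zero_mem' := ⟨0, by simp⟩
  add_mem' := by
    rintro a b ⟨k, hk⟩ ⟨l, hl⟩
    refine ⟨k + l, ?_⟩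
    rw [mul_add, pow_add]
    refine J.add_mem ?_ ?_
    · rw [mul_comm ((∏ i, X i) ^ k) ((∏ i, X i) ^ l), mul_assoc]
      exact J.mul_mem_left _ hk
    · rw [mul_assoc]
      exact J.mul_mem_left _ hl
  smul_mem' := by
    rintro c f ⟨k, hk⟩
    refine ⟨k, ?_⟩
    rw [smul_eq_mul, mul_left_comm]
    exact J.mul_mem_left _ hk

lemma prodX_pow_monomial {n k : ℕ} :
    ∃ β : Fin n →₀ ℕ, ((∏ i, X i : MvPolynomial (Fin n) ℝ)) ^ k = monomial β 1 := by
  induction k with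
  | zero => exact ⟨0, by simp⟩
  | succ k ih =>
    obtain ⟨β, hβ⟩ := ih
    have hp : ∃ γ : Fin n →₀ ℕ, (∏ i, X i : MvPolynomial (Fin n) ℝ) = monomial γ 1 := by
      refine ⟨∑ i, Finsupp.single i 1, ?_⟩
      rw [monomial_sum_one]
      exact Finset.prod_congr rfl fun i _ => rfl
    obtain ⟨γ, hγ⟩ := hp
    exact ⟨β + γ, by rw [pow_succ, hβ, hγ, monomial_mul, one_mul]⟩

lemma cond_iff_sat {n : ℕ} (J : Ideal (MvPolynomial (Fin n) ℝ)) :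
    ((¬ ∃ α : Fin n →₀ ℕ, (monomial α (1 : ℝ)) ∈ J) ∧
      (J : Set (MvPolynomial (Fin n) ℝ)) ∩ {f | NonnegCoeffs f} = {0}) ↔
    ((¬ ∃ α : Fin n →₀ ℕ, (monomial α (1 : ℝ)) ∈ satIdeal J) ∧
      ((satIdeal J : Set (MvPolynomial (Fin n) ℝ)) ∩ {f | NonnegCoeffs f} = {0})) := by
  have hle : ∀ f, f ∈ J → f ∈ satIdeal J := fun f hf => ⟨0, by simpa using hf⟩
  constructor
  · rintro ⟨hmon, hpos⟩
    constructor
    · rintro ⟨α, k, hk⟩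
      obtain ⟨β, hβ⟩ := prodX_pow_monomial (n := n) (k := k)
      rw [hβ, monomial_mul, one_mul] at hk
      exact hmon ⟨β + α, hk⟩
    · apply Set.eq_singleton_iff_unique_mem.mpr
      refine ⟨⟨(satIdeal J).zero_mem, fun α => by simp [NonnegCoeffs]⟩, ?_⟩
      rintro f ⟨⟨k, hk⟩, hf⟩
      obtain ⟨β, hβ⟩ := prodX_pow_monomial (n := n) (k := k)
      have hnn : NonnegCoeffs ((∏ i, X i : MvPolynomial (Fin n) ℝ) ^ k * f) := by
        intro γ
        rw [hβ, coeff_monomial_mul']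
        split_ifs with hcond
        · simpa using hf _
        · exact le_rfl
      have hmem : ((∏ i, X i : MvPolynomial (Fin n) ℝ) ^ k * f) ∈
          (J : Set (MvPolynomial (Fin n) ℝ)) ∩ {f | NonnegCoeffs f} := ⟨hk, hnn⟩
      rw [hpos] at hmem
      have hz : (∏ i, X i : MvPolynomial (Fin n) ℝ) ^ k * f = 0 := hmem
      have hne : ((∏ i, X i : MvPolynomial (Fin n) ℝ)) ^ k ≠ 0 := by
        rw [hβ]
        simp [monomial_eq_zero]
      rcases mul_eq_zero.mp hz with h0 | h0
      · exact absurd h0 hne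
      · exact h0
  · rintro ⟨hmon, hpos⟩
    refine ⟨fun ⟨α, hα⟩ => hmon ⟨α, hle _ hα⟩, ?_⟩
    apply Set.eq_singleton_iff_unique_mem.mpr
    refine ⟨⟨J.zero_mem, fun α => by simp [NonnegCoeffs]⟩, ?_⟩
    rintro f ⟨hfJ, hf⟩
    have hmem : f ∈ ((satIdeal J : Ideal _) : Set (MvPolynomial (Fin n) ℝ)) ∩ {f | NonnegCoeffs f} :=
      ⟨hle _ hfJ, hf⟩
    rwa [hpos] at hmem

/-- If two ideals `J₁, J₂ ⊴ ℝ[x₁,…,xₙ]` have equal saturations at the product of all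
variables, then `J₁` contains no monomial and satisfies `J₁ ∩ ℝ≥0[x] = {0}` if and only
if the same holds for `J₂`. -/
theorem statement9 (n : ℕ) (J₁ J₂ : Ideal (MvPolynomial (Fin n) ℝ))
    (h : satIdeal J₁ = satIdeal J₂) :
    ((¬ ∃ α : Fin n →₀ ℕ, (monomial α (1 : ℝ)) ∈ J₁) ∧
      (J₁ : Set (MvPolynomial (Fin n) ℝ)) ∩ {f | NonnegCoeffs f} = {0}) ↔
    ((¬ ∃ α : Fin n →₀ ℕ, (monomial α (1 : ℝ)) ∈ J₂) ∧
      (J₂ : Set (MvPolynomial (Fin n) ℝ)) ∩ {f | NonnegCoeffs f} = {0}) := by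
  rw [cond_iff_sat J₁, cond_iff_sat J₂, h]
end

section
/- Let K be a field, I ⊴ K[x₁,…,xₙ] an ideal, and w, v ∈ ℚⁿ weight vectors such that neither in_w(I) nor in_v(I) contains a monomial. Suppose there exists a trinomial P = s₀ + s₁ + s₂ ∈ I (a polynomial with exactly three nonzero terms s₀, s₁, s₂ on pairwise distinct exponent vectors) such that in_w(P) ≠ in_v(P). Then the saturated initial ideals differ: in_w(I) : p^∞ ≠ in_v(I) : p^∞, where the saturation is taken at the product p = x₁⋯xₙ of all variables. -/
open MvPolynomial


/-- The `w`-weighted degree of an exponent vector `α`: `w·α = Σᵢ wᵢ αᵢ`. -/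
def wdeg {n : ℕ} (w : Fin n → ℚ) (α : Fin n →₀ ℕ) : ℚ := ∑ i, w i * (α i : ℚ)

/-- The initial form `in_w(f)`: the sum of the terms `c_α x^α` of `f` for which `w·α`
is maximal over the support of `f` (with `in_w(0) = 0`). -/
noncomputable def initialForm {n : ℕ} {K : Type*} [Field K] (w : Fin n → ℚ)
    (f : MvPolynomial (Fin n) K) : MvPolynomial (Fin n) K :=
  ∑ α ∈ f.support.filter (fun α => ∀ β ∈ f.support, wdeg w β ≤ wdeg w α),
    monomial α (coeff α f)

/-- The initial ideal `in_w(I) = ⟨in_w(f) : f ∈ I⟩`. -/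
noncomputable def initialIdeal {n : ℕ} {K : Type*} [Field K] (w : Fin n → ℚ)
    (I : Ideal (MvPolynomial (Fin n) K)) : Ideal (MvPolynomial (Fin n) K) :=
  Ideal.span (initialForm w '' (I : Set (MvPolynomial (Fin n) K)))

/-!
Initial ideals are homogeneous for the weight grading, and so are their saturations; a
homogeneous ideal containing no monomial contains no polynomial in which some weight is carried
by a single term. Suppose `in_w(I) : p^∞ ⊆ in_v(I) : p^∞` and `α ∈ supp in_w(P) \ supp in_v(P)`.
Since `in_v(P)` has at least two of the three terms of `P`, its support is `supp P \ {α}`, so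
every other term of `in_w(P)` is `v`-maximal in `P` while `α` is not: the `v`-weight of `α` is
carried by a single term of `in_w(P) ∈ in_v(I) : p^∞`, a contradiction. Hence
`supp in_w(P) ⊆ supp in_v(P)`, and by symmetry the two initial forms coincide.
-/

attribute [local instance] MvPolynomial.weightedGradedAlgebra

section WeightedHomogeneous

variable {σ R M : Type*} [CommRing R] [AddCommMonoid M] [DecidableEq M] {w : σ → M}

theorem monomial_coeff_mem_of_weight_unique {J : Ideal (MvPolynomial σ R)}
    (hJ : J.IsHomogeneous (weightedHomogeneousSubmodule R w)) {g : MvPolynomial σ R} (hg : g ∈ J)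
    {α : σ →₀ ℕ} (hα : ∀ β ∈ g.support, Finsupp.weight w β = Finsupp.weight w α → β = α) :
    monomial α (coeff α g) ∈ J := by
  have hcomp := weightedHomogeneousComponent_mem_of_mem R w hJ hg (Finsupp.weight w α)
  have hsupp : ∀ β ∈ (weightedHomogeneousComponent w (Finsupp.weight w α) g).support, β = α := by
    intro β hβ
    rw [support_weightedHomogeneousComponent, Finset.mem_filter] at hβ
    exact hα β hβ.1 hβ.2
  rwa [eq_monomial_of_support_subset_singleton hsupp, coeff_weightedHomogeneousComponent,
    if_pos rfl] at hcomp

theorem exists_ne_weight_eq_of_mem {K : Type*} [Field K] {J : Ideal (MvPolynomial σ K)}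
    (hJ : J.IsHomogeneous (weightedHomogeneousSubmodule K w))
    (hno : ¬ ∃ α : σ →₀ ℕ, monomial α (1 : K) ∈ J) {g : MvPolynomial σ K} (hg : g ∈ J)
    {α : σ →₀ ℕ} (hα : α ∈ g.support) :
    ∃ β ∈ g.support, β ≠ α ∧ Finsupp.weight w β = Finsupp.weight w α := by
  by_contra! h
  have hmem := J.mul_mem_left (C (coeff α g)⁻¹)
    (monomial_coeff_mem_of_weight_unique hJ hg fun β hβ hβw => by_contra fun hne => h β hβ hne hβw)
  rw [C_mul_monomial, inv_mul_cancel₀ (mem_support_iff.mp hα)] at hmem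
  exact hno ⟨α, hmem⟩

end WeightedHomogeneous

section Saturation

variable {n : ℕ} {R : Type*} [CommRing R]

theorem le_satIdeal (J : Ideal (MvPolynomial (Fin n) R)) : J ≤ satIdeal J :=
  fun f hf => ⟨0, by simpa using hf⟩

theorem prod_univ_X_pow_eq_monomial (k : ℕ) :
    (∏ i, X i : MvPolynomial (Fin n) R) ^ k = monomial (k • ∑ i, Finsupp.single i 1) 1 := by
  change (∏ i, monomial (Finsupp.single i 1) (1 : R)) ^ k = _
  rw [← monomial_sum_one, monomial_pow, one_pow]

theorem not_exists_monomial_mem_satIdeal {J : Ideal (MvPolynomial (Fin n) R)}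
    (hno : ¬ ∃ α : Fin n →₀ ℕ, monomial α (1 : R) ∈ J) :
    ¬ ∃ α : Fin n →₀ ℕ, monomial α (1 : R) ∈ satIdeal J := by
  rintro ⟨α, k, hk⟩
  rw [prod_univ_X_pow_eq_monomial, monomial_mul, one_mul] at hk
  exact hno ⟨_, hk⟩

theorem satIdeal_isHomogeneous {M : Type*} [AddCancelCommMonoid M] [DecidableEq M] {w : Fin n → M}
    {J : Ideal (MvPolynomial (Fin n) R)} (hJ : J.IsHomogeneous (weightedHomogeneousSubmodule R w)) :
    (satIdeal J).IsHomogeneous (weightedHomogeneousSubmodule R w) := by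
  rintro j f ⟨k, hk⟩
  have hp : (∏ i, X i : MvPolynomial (Fin n) R) ^ k ∈
      weightedHomogeneousSubmodule R w (k • ∑ i, w i) :=
    ((IsWeightedHomogeneous.prod _ _ _ fun i _ => isWeightedHomogeneous_X R w i).pow k)
  refine ⟨k, ?_⟩
  rw [← DirectSum.coe_decompose_mul_add_of_left_mem _ hp]
  exact hJ _ hk

end Saturation

section InitialForm

variable {n : ℕ} {K : Type*} [Field K]

theorem wdeg_eq_weight (w : Fin n → ℚ) (α : Fin n →₀ ℕ) : wdeg w α = Finsupp.weight w α := by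
  simp [wdeg, Finsupp.weight_apply, Finsupp.sum_fintype, mul_comm]

theorem coeff_initialForm (w : Fin n → ℚ) (f : MvPolynomial (Fin n) K) (γ : Fin n →₀ ℕ) :
    coeff γ (initialForm w f) =
      if ∀ β ∈ f.support, wdeg w β ≤ wdeg w γ then coeff γ f else 0 := by
  classical
  simp only [initialForm, coeff_sum, coeff_monomial, Finset.sum_ite_eq', Finset.mem_filter,
    mem_support_iff]
  by_cases hγ : coeff γ f = 0 <;> simp [hγ]

theorem mem_support_initialForm {w : Fin n → ℚ} {f : MvPolynomial (Fin n) K} {γ : Fin n →₀ ℕ} :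
    γ ∈ (initialForm w f).support ↔ γ ∈ f.support ∧ ∀ β ∈ f.support, wdeg w β ≤ wdeg w γ := by
  rw [mem_support_iff, coeff_initialForm]
  split_ifs with h
  · exact mem_support_iff.symm.trans (and_iff_left h).symm
  · exact iff_of_false (fun h0 => h0 rfl) fun hγ => h hγ.2

theorem support_initialForm_subset (w : Fin n → ℚ) (f : MvPolynomial (Fin n) K) :
    (initialForm w f).support ⊆ f.support :=
  fun _ hγ => (mem_support_initialForm.mp hγ).1

theorem initialForm_ne_zero (w : Fin n → ℚ) {f : MvPolynomial (Fin n) K} (hf : f ≠ 0) :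
    initialForm w f ≠ 0 := by
  obtain ⟨γ, hγ, hmax⟩ := f.support.exists_max_image (wdeg w) (support_nonempty.mpr hf)
  exact support_nonempty.mp ⟨γ, mem_support_initialForm.mpr ⟨hγ, hmax⟩⟩

theorem initialForm_eq_of_support_eq {w v : Fin n → ℚ} {f : MvPolynomial (Fin n) K}
    (h : (initialForm w f).support = (initialForm v f).support) :
    initialForm w f = initialForm v f := by
  ext γ
  by_cases hγ : γ ∈ (initialForm w f).support
  · have hγ' := h ▸ hγ
    rw [mem_support_initialForm] at hγ hγ'
    rw [coeff_initialForm, coeff_initialForm, if_pos hγ.2, if_pos hγ'.2]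
  · have hγ' := h ▸ hγ
    rw [notMem_support_iff] at hγ hγ'
    rw [hγ, hγ']

theorem initialForm_isWeightedHomogeneous (w : Fin n → ℚ) (f : MvPolynomial (Fin n) K) :
    ∃ m, IsWeightedHomogeneous w (initialForm w f) m := by
  rcases (initialForm w f).support.eq_empty_or_nonempty with h | ⟨γ, hγ⟩
  · exact ⟨0, by rw [support_eq_empty.mp h]; exact isWeightedHomogeneous_zero _ _ _⟩
  refine ⟨Finsupp.weight w γ, fun β hβ => ?_⟩
  obtain ⟨hβf, hβmax⟩ := mem_support_initialForm.mp (mem_support_iff.mpr hβ)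
  obtain ⟨hγf, hγmax⟩ := mem_support_initialForm.mp hγ
  rw [← wdeg_eq_weight, ← wdeg_eq_weight]
  exact le_antisymm (hγmax β hβf) (hβmax γ hγf)

theorem initialForm_mem_initialIdeal (w : Fin n → ℚ) {I : Ideal (MvPolynomial (Fin n) K)}
    {f : MvPolynomial (Fin n) K} (hf : f ∈ I) : initialForm w f ∈ initialIdeal w I :=
  Ideal.subset_span ⟨f, hf, rfl⟩

theorem initialIdeal_isHomogeneous (w : Fin n → ℚ) (I : Ideal (MvPolynomial (Fin n) K)) :
    (initialIdeal w I).IsHomogeneous (weightedHomogeneousSubmodule K w) := by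
  refine Ideal.homogeneous_span _ _ ?_
  rintro _ ⟨f, -, rfl⟩
  exact initialForm_isWeightedHomogeneous w f

end InitialForm

theorem support_initialForm_subset_of_satIdeal_le {n : ℕ} {K : Type*} [Field K]
    {I : Ideal (MvPolynomial (Fin n) K)} {w v : Fin n → ℚ}
    (hv : ¬ ∃ α : Fin n →₀ ℕ, monomial α (1 : K) ∈ initialIdeal v I)
    {P : MvPolynomial (Fin n) K} (hP : P ∈ I) (hP3 : P.support.card ≤ 3)
    (hle : satIdeal (initialIdeal w I) ≤ satIdeal (initialIdeal v I)) :
    (initialForm w P).support ⊆ (initialForm v P).support := by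
  intro α hαw
  by_contra hαv
  have hαP := support_initialForm_subset w P hαw
  have hinv := initialIdeal_isHomogeneous v I
  have hT2 : 2 ≤ (initialForm v P).support.card := by
    obtain ⟨γ, hγ⟩ := support_nonempty.mpr (initialForm_ne_zero v (support_nonempty.mp ⟨α, hαP⟩))
    obtain ⟨δ, hδ, hδγ, -⟩ :=
      exists_ne_weight_eq_of_mem hinv hv (initialForm_mem_initialIdeal v hP) hγ
    exact Finset.one_lt_card.mpr ⟨δ, hδ, γ, hγ, hδγ⟩
  have hT : (initialForm v P).support = P.support.erase α := by
    refine Finset.eq_of_subset_of_card_le (fun γ hγ => Finset.mem_erase.mpr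
      ⟨fun h => hαv (h ▸ hγ), support_initialForm_subset v P hγ⟩) ?_
    rw [Finset.card_erase_of_mem hαP]
    omega
  have hsat : initialForm w P ∈ satIdeal (initialIdeal v I) :=
    hle (le_satIdeal _ (initialForm_mem_initialIdeal w hP))
  obtain ⟨β, hβ, hβα, hβweight⟩ := exists_ne_weight_eq_of_mem (satIdeal_isHomogeneous hinv)
    (not_exists_monomial_mem_satIdeal hv) hsat hαw
  have hβv : β ∈ (initialForm v P).support :=
    hT ▸ Finset.mem_erase.mpr ⟨hβα, support_initialForm_subset w P hβ⟩
  rw [← wdeg_eq_weight, ← wdeg_eq_weight] at hβweight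
  exact hαv (mem_support_initialForm.mpr
    ⟨hαP, hβweight ▸ (mem_support_initialForm.mp hβv).2⟩)

/-- Let `I ⊴ K[x₁,…,xₙ]` and `w, v ∈ ℚⁿ` be such that neither `in_w(I)` nor `in_v(I)`
contains a monomial.  If there is a trinomial `P ∈ I` with `in_w(P) ≠ in_v(P)`, then the
saturated initial ideals differ: `in_w(I) : p^∞ ≠ in_v(I) : p^∞`. -/
theorem statement10 (n : ℕ) (K : Type*) [Field K] (I : Ideal (MvPolynomial (Fin n) K))
    (w v : Fin n → ℚ)
    (hw : ¬ ∃ α : Fin n →₀ ℕ, (monomial α (1 : K)) ∈ initialIdeal w I)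
    (hv : ¬ ∃ α : Fin n →₀ ℕ, (monomial α (1 : K)) ∈ initialIdeal v I)
    (P : MvPolynomial (Fin n) K) (hP : P ∈ I) (hP3 : P.support.card = 3)
    (hPwv : initialForm w P ≠ initialForm v P) :
    satIdeal (initialIdeal w I) ≠ satIdeal (initialIdeal v I) := by
  intro hsat
  exact hPwv (initialForm_eq_of_support_eq (subset_antisymm
    (support_initialForm_subset_of_satIdeal_le hv hP hP3.le hsat.le)
    (support_initialForm_subset_of_satIdeal_le hw hP hP3.le hsat.ge)))
end
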